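/- Under assumptions A1–A3, the equation θ̂ + b(θ̂) = E[θ | θ ≥ θ̂] has a unique solution θ̂ in (θ̲, θ̄). -/

import Mathlib

open Set Filter intervalIntegral
open Topology

/-!
Write `H t = ∫_t^θ̄ (θ - t - b t) f θ dθ`; as the tail mass `∫_t^θ̄ f` is positive, the equation
says `H t = 0`. One computes `H' = (1 + b') K` with `K = B f - ∫_t^θ̄ f`, and (A1) says exactly that
`K' = f + (B f)' > 0`. As `H θ̄ = 0`, the mean value theorem puts a zero of `K` to the right of
any zero of `H`; hence all zeros of `H` lie where `K < 0`, where `H` strictly decreases.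
By (A3) `H θ̲ > 0`, and by (A2) `K θ̄ > 0`, so `H` is negative just left of `θ̄`; the
intermediate value theorem gives the zero.
-/

lemma strictMonoOn_Icc_of_hasDerivAt_pos {f f' : ℝ → ℝ} {a c : ℝ}
    (hf : ContinuousOn f (Icc a c)) (hf' : ∀ x ∈ Ioo a c, HasDerivAt f (f' x) x)
    (hpos : ∀ x ∈ Ioo a c, 0 < f' x) : StrictMonoOn f (Icc a c) :=
  strictMonoOn_of_deriv_pos (convex_Icc a c) hf fun x hx => by
    rw [interior_Icc] at hx
    rw [(hf' x hx).deriv]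
    exact hpos x hx

lemma strictAntiOn_Icc_of_hasDerivAt_neg {f f' : ℝ → ℝ} {a c : ℝ}
    (hf : ContinuousOn f (Icc a c)) (hf' : ∀ x ∈ Ioo a c, HasDerivAt f (f' x) x)
    (hneg : ∀ x ∈ Ioo a c, f' x < 0) : StrictAntiOn f (Icc a c) :=
  strictAntiOn_of_deriv_neg (convex_Icc a c) hf fun x hx => by
    rw [interior_Icc] at hx
    rw [(hf' x hx).deriv]
    exact hneg x hx

section DerivativeWithIncreasingFactor

variable {a c : ℝ} {H p K : ℝ → ℝ}

lemma eq_of_hasDerivAt_mul_of_eq_zero (hH : ContinuousOn H (Icc a c))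
    (hH' : ∀ x ∈ Ioo a c, HasDerivAt H (p x * K x) x) (hp : ∀ x ∈ Ioo a c, 0 < p x)
    (hK : StrictMonoOn K (Ioo a c)) (hc : H c = 0) {t₁ t₂ : ℝ} (ht₁ : t₁ ∈ Ioo a c)
    (ht₂ : t₂ ∈ Ioo a c) (h₁ : H t₁ = 0) (h₂ : H t₂ = 0) : t₁ = t₂ := by
  wlog hle : t₁ ≤ t₂ generalizing t₁ t₂
  · exact (this ht₂ ht₁ h₂ h₁ (le_of_not_ge hle)).symm
  refine hle.eq_or_lt.resolve_right fun hlt => ?_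
  -- The mean value theorem on `[t₂, c]` produces a zero `x` of `K`; `K < 0` on `(t₁, t₂)`.
  obtain ⟨x, hx, hslope⟩ := exists_hasDerivAt_eq_slope H (fun x => p x * K x) ht₂.2
    (hH.mono (Icc_subset_Icc ht₂.1.le le_rfl)) fun y hy => hH' y ⟨ht₂.1.trans hy.1, hy.2⟩
  have hxI : x ∈ Ioo a c := ⟨ht₂.1.trans hx.1, hx.2⟩
  have hKx : K x = 0 := by
    rw [hc, h₂, sub_self, zero_div] at hslope
    exact (mul_eq_zero.1 hslope).resolve_left (hp x hxI).ne'
  have hanti : StrictAntiOn H (Icc t₁ t₂) := by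
    refine strictAntiOn_Icc_of_hasDerivAt_neg (hH.mono (Icc_subset_Icc ht₁.1.le ht₂.2.le))
      (fun y hy => hH' y ⟨ht₁.1.trans hy.1, hy.2.trans ht₂.2⟩) fun y hy => ?_
    have hyI : y ∈ Ioo a c := ⟨ht₁.1.trans hy.1, hy.2.trans ht₂.2⟩
    exact mul_neg_of_pos_of_neg (hp y hyI) (hKx ▸ hK hyI hxI (hy.2.trans hx.1))
  exact (hanti (left_mem_Icc.2 hle) (right_mem_Icc.2 hle) hlt).ne (h₂.trans h₁.symm)

lemma exists_mem_Ioo_eq_zero_of_hasDerivAt_mul (hac : a < c) (hH : ContinuousOn H (Icc a c))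
    (hH' : ∀ x ∈ Ioo a c, HasDerivAt H (p x * K x) x) (hp : ∀ x ∈ Ioo a c, 0 < p x)
    (hK : StrictMonoOn K (Ioo a c)) (hKc : ContinuousWithinAt K (Ioo a c) c) (hKc₀ : 0 < K c)
    (ha : 0 < H a) (hc : H c = 0) : ∃ t ∈ Ioo a c, H t = 0 := by
  have : NeBot (𝓝[Ioo a c] c) := right_nhdsWithin_Ioo_neBot hac
  obtain ⟨s, hs, hKs⟩ := (eventually_mem_nhdsWithin.and (hKc.eventually_const_lt hKc₀)).exists
  have hHs : H s < 0 := by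
    have hmono : StrictMonoOn H (Icc s c) := by
      refine strictMonoOn_Icc_of_hasDerivAt_pos (hH.mono (Icc_subset_Icc hs.1.le le_rfl))
        (fun x hx => hH' x ⟨hs.1.trans hx.1, hx.2⟩) fun x hx => ?_
      have hxI : x ∈ Ioo a c := ⟨hs.1.trans hx.1, hx.2⟩
      exact mul_pos (hp x hxI) (hKs.trans (hK hs hxI hx.1))
    simpa [hc] using hmono (left_mem_Icc.2 hs.2.le) (right_mem_Icc.2 hs.2.le) hs.2
  obtain ⟨t, ht, hHt⟩ :=
    intermediate_value_Ioo' hs.1.le (hH.mono (Icc_subset_Icc le_rfl hs.2.le)) ⟨hHs, ha⟩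
  exact ⟨t, ⟨ht.1, ht.2.trans hs.2⟩, hHt⟩

lemma existsUnique_mem_Ioo_eq_zero_of_hasDerivAt_mul (hac : a < c)
    (hH : ContinuousOn H (Icc a c)) (hH' : ∀ x ∈ Ioo a c, HasDerivAt H (p x * K x) x)
    (hp : ∀ x ∈ Ioo a c, 0 < p x) (hK : StrictMonoOn K (Ioo a c))
    (hKc : ContinuousWithinAt K (Ioo a c) c) (hKc₀ : 0 < K c) (ha : 0 < H a) (hc : H c = 0) :
    ∃! t, t ∈ Ioo a c ∧ H t = 0 := by
  obtain ⟨t, ht, hHt⟩ := exists_mem_Ioo_eq_zero_of_hasDerivAt_mul hac hH hH' hp hK hKc hKc₀ ha hc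
  exact ⟨t, ⟨ht, hHt⟩, fun s ⟨hs, hHs⟩ =>
    eq_of_hasDerivAt_mul_of_eq_zero hH hH' hp hK hc hs ht hHs hHt⟩

end DerivativeWithIncreasingFactor

section TailIntegrals

variable {f : ℝ → ℝ} {a c : ℝ}

lemma continuousOn_integral_left (hac : a ≤ c) (hf : ContinuousOn f (Icc a c)) :
    ContinuousOn (fun t => ∫ θ in t..c, f θ) (Icc a c) := by
  rw [← uIcc_of_le hac] at hf ⊢
  exact continuousOn_primitive_interval_left hf.integrableOn_uIcc

lemma hasDerivAt_integral_left_of_continuousOn (hf : ContinuousOn f (Icc a c)) {x : ℝ}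
    (hx : x ∈ Ioo a c) : HasDerivAt (fun t => ∫ θ in t..c, f θ) (-f x) x := by
  have hsub : uIcc x c ⊆ Icc a c := by
    rw [uIcc_of_le hx.2.le]
    exact Icc_subset_Icc_left hx.1.le
  exact integral_hasDerivAt_left (hf.mono hsub).intervalIntegrable
    ((hf.mono Ioo_subset_Icc_self).stronglyMeasurableAtFilter isOpen_Ioo x hx)
    (hf.continuousAt (Icc_mem_nhds hx.1 hx.2))

lemma integral_left_pos (hf : ContinuousOn f (Icc a c)) (hpos : ∀ θ ∈ Icc a c, 0 < f θ) {t : ℝ}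
    (ht : t ∈ Ico a c) : 0 < ∫ θ in t..c, f θ :=
  intervalIntegral_pos_of_pos_on
    ((hf.mono (Icc_subset_Icc_left ht.1)).intervalIntegrable_of_Icc ht.2.le)
    (fun x hx => hpos x ⟨ht.1.trans hx.1.le, hx.2.le⟩) ht.2

/-- `∫_t^c (θ - t - b t) f θ dθ`. -/
noncomputable def tailGap (f b : ℝ → ℝ) (c t : ℝ) : ℝ :=
  (∫ θ in t..c, θ * f θ) - (t + b t) * ∫ θ in t..c, f θ

lemma tailGap_self (b : ℝ → ℝ) (c : ℝ) : tailGap f b c c = 0 := by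
  simp [tailGap]

lemma eq_integral_div_iff_tailGap_eq_zero (b : ℝ → ℝ) {t : ℝ} (hF : (∫ θ in t..c, f θ) ≠ 0) :
    t + b t = (∫ θ in t..c, θ * f θ) / (∫ θ in t..c, f θ) ↔ tailGap f b c t = 0 := by
  rw [eq_div_iff hF, tailGap, sub_eq_zero, eq_comm]

lemma continuousOn_tailGap {b : ℝ → ℝ} (hac : a ≤ c) (hf : ContinuousOn f (Icc a c))
    (hb : ContinuousOn b (Icc a c)) : ContinuousOn (tailGap f b c) (Icc a c) :=
  (continuousOn_integral_left hac (continuousOn_id.mul hf)).sub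
    ((continuousOn_id.add hb).mul (continuousOn_integral_left hac hf))

lemma hasDerivAt_tailGap {b : ℝ → ℝ} {b'x Bx x : ℝ} (hf : ContinuousOn f (Icc a c))
    (hx : x ∈ Ioo a c) (hb : HasDerivAt b b'x x) (hB : b x = Bx * (1 + b'x)) :
    HasDerivAt (tailGap f b c) ((1 + b'x) * (Bx * f x - ∫ θ in x..c, f θ)) x := by
  have hF := hasDerivAt_integral_left_of_continuousOn hf hx
  refine ((hasDerivAt_integral_left_of_continuousOn (continuousOn_id.mul hf) hx).sub
    (((hasDerivAt_id x).add hb).mul hF)).congr_deriv ?_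
  simp only [Pi.mul_apply, Pi.add_apply, id, hB]
  ring

end TailIntegrals

theorem stmt_6_general (θl θu : ℝ) (hθ : θl < θu)
    (f b b' B g : ℝ → ℝ)
    (hf : ContinuousOn f (Icc θl θu)) (hfpos : ∀ θ ∈ Icc θl θu, 0 < f θ)
    (hfdens : (∫ θ in θl..θu, f θ) = 1)
    (hb : ∀ θ ∈ Icc θl θu, HasDerivAt b (b' θ) θ)
    (hb' : ∀ θ ∈ Icc θl θu, -1 < b' θ)
    (hB : ∀ θ ∈ Icc θl θu, B θ = b θ / (1 + b' θ))
    (hg : ∀ θ ∈ Icc θl θu, HasDerivAt (fun t => B t * f t) (g θ) θ)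
    (hA1 : ∀ θ ∈ Icc θl θu, 0 < f θ + g θ)
    (hA2b : 0 < b θu)
    (hA3 : θl + b θl < ∫ θ in θl..θu, θ * f θ) :
    ∃! t : ℝ, t ∈ Ioo θl θu ∧
      t + b t = (∫ θ in t..θu, θ * f θ) / (∫ θ in t..θu, f θ) := by
  have hp : ∀ θ ∈ Icc θl θu, 0 < 1 + b' θ := fun θ hθ' => by linarith [hb' θ hθ']
  have hbB : ∀ θ ∈ Icc θl θu, b θ = B θ * (1 + b' θ) := fun θ hθ' => by
    rw [hB θ hθ', div_mul_cancel₀ _ (hp θ hθ').ne']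
  have hu : θu ∈ Icc θl θu := right_mem_Icc.2 hθ.le
  set K : ℝ → ℝ := fun t => B t * f t - ∫ θ in t..θu, f θ
  have hKcont : ContinuousOn K (Icc θl θu) :=
    ContinuousOn.sub (fun x hx => (hg x hx).continuousAt.continuousWithinAt)
      (continuousOn_integral_left hθ.le hf)
  have hK : StrictMonoOn K (Icc θl θu) :=
    strictMonoOn_Icc_of_hasDerivAt_pos hKcont
      (fun x hx => (hg x (Ioo_subset_Icc_self hx)).sub
        (hasDerivAt_integral_left_of_continuousOn hf hx))
      fun x hx => by linarith [hA1 x (Ioo_subset_Icc_self hx)]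
  have hgap := existsUnique_mem_Ioo_eq_zero_of_hasDerivAt_mul hθ
    (continuousOn_tailGap hθ.le hf fun x hx => (hb x hx).continuousAt.continuousWithinAt)
    (fun x hx => hasDerivAt_tailGap hf hx (hb x (Ioo_subset_Icc_self hx))
      (hbB x (Ioo_subset_Icc_self hx)))
    (fun x hx => hp x (Ioo_subset_Icc_self hx)) (hK.mono Ioo_subset_Icc_self)
    ((hKcont θu hu).mono Ioo_subset_Icc_self)
    (by simpa [K, hB θu hu] using mul_pos (div_pos hA2b (hp θu hu)) (hfpos θu hu))
    (by simpa [tailGap, hfdens] using hA3) (tailGap_self b θu)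
  refine (existsUnique_congr fun t => and_congr_right fun ht => ?_).2 hgap
  exact eq_integral_div_iff_tailGap_eq_zero b
    (integral_left_pos hf hfpos (Ioo_subset_Ico_self ht)).ne'

/-- Under A1–A3, the equation `θ̂ + b(θ̂) = E[θ | θ ≥ θ̂]` has a unique solution in `(θ̲, θ̄)`. -/
theorem stmt_6 (θl θu : ℝ) (hθ : θl < θu)
    (f b b' B g : ℝ → ℝ)
    (hf : ContinuousOn f (Icc θl θu)) (hfpos : ∀ θ ∈ Icc θl θu, 0 < f θ)
    (hfdens : (∫ θ in θl..θu, f θ) = 1)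
    (hb : ∀ θ ∈ Icc θl θu, HasDerivAt b (b' θ) θ)
    (hb'cont : ContinuousOn b' (Icc θl θu))
    (hb' : ∀ θ ∈ Icc θl θu, -1 < b' θ)
    (hB : ∀ θ ∈ Icc θl θu, B θ = b θ / (1 + b' θ))
    (hg : ∀ θ ∈ Icc θl θu, HasDerivAt (fun t => B t * f t) (g θ) θ)
    (hA1 : ∀ θ ∈ Icc θl θu, 0 < f θ + g θ)
    (hA2a : 0 ≤ b θl) (hA2b : 0 < b θu) (hA2c : 0 < ∫ θ in θl..θu, b θ * f θ)
    (hA3 : θl + b θl < ∫ θ in θl..θu, θ * f θ) :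
    ∃! t : ℝ, t ∈ Ioo θl θu ∧
      t + b t = (∫ θ in t..θu, θ * f θ) / (∫ θ in t..θu, f θ) :=
  stmt_6_general θl θu hθ f b b' B g hf hfpos hfdens hb hb' hB hg hA1 hA2b hA3
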